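/- arXiv:2006.13820 — 2 statements merged into one kernel-verified Lean document; each statement's English description precedes it below -/
import Mathlib

section
/- Let B ∈ ℝ^{n×(m−p)}, C ∈ ℝ^{n×p}, x₀, x_goal ∈ ℝⁿ, ε ≥ 0, and define g(h) := ‖Cᵀh‖ − ‖Bᵀh‖ for unit vectors h ∈ ℝⁿ. If the maximum of g over the unit sphere is strictly negative, then there exists a time t_lim ≥ 0 such that for all t ≥ t_lim the target ball G = {x ∈ ℝⁿ : ‖x − x_goal‖ ≤ ε} is resiliently reachable at time t from x₀. -/
open MeasureTheory Matrix

/-- Euclidean norm of a vector in `ℝ^k`. -/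
noncomputable def eNorm {k : ℕ} (v : Fin k → ℝ) : ℝ := Real.sqrt (∑ i, (v i) ^ 2)

/-- A square-integrable signal on `[0,T]` with `L²` norm at most `1`. -/
def Admissible {k : ℕ} (T : ℝ) (f : ℝ → Fin k → ℝ) : Prop :=
  Measurable f ∧ IntegrableOn (fun t => (eNorm (f t)) ^ 2) (Set.Ioc 0 T) ∧
    (∫ t in Set.Ioc (0 : ℝ) T, (eNorm (f t)) ^ 2) ≤ 1

/-- The target ball of center `xgoal` and radius `ε` is resiliently reachable at time `T`
from `x₀` for the driftless system `ẋ = Bu + Cw`. -/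
def ResilientlyReachableAt {n q p : ℕ} (B : Matrix (Fin n) (Fin q) ℝ)
    (C : Matrix (Fin n) (Fin p) ℝ) (x₀ xgoal : Fin n → ℝ) (ε T : ℝ) : Prop :=
  ∀ w : ℝ → Fin p → ℝ, Admissible T w →
    ∃ u : ℝ → Fin q → ℝ, Admissible T u ∧
      eNorm ((x₀ + ∫ t in Set.Ioc (0 : ℝ) T, (B.mulVec (u t) + C.mulVec (w t))) - xgoal) ≤ ε

/-!
Since `g < 0` on the compact unit sphere and both norms are positively homogeneous, there is
`c > 0` with `‖Cᵀh‖ + c‖h‖ ≤ ‖Bᵀh‖` for all `h`. As `h ↦ s‖Bᵀh‖` is the support function of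
`B` applied to the ball of radius `s`, Hahn–Banach turns this into
`B(s·ball) ⊇ C(s·ball) + cs·ball`. By Cauchy–Schwarz an admissible disturbance `w` contributes
`C W` with `‖W‖ = ‖∫ w‖ ≤ √T`, so as soon as `c√T ≥ ‖x_goal − x₀‖` there is `z` with `‖z‖ ≤ √T`
and `Bz + CW = x_goal − x₀`, and the constant control `z / T`, of energy `‖z‖² / T ≤ 1`, steers
the state exactly to `x_goal`.
-/

open Set Metric RealInnerProductSpace WithLp

section

variable {E F G : Type*} [NormedAddCommGroup E] [NormedSpace ℝ E] [FiniteDimensional ℝ E]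
  [NormedAddCommGroup F] [NormedSpace ℝ F] [NormedAddCommGroup G] [NormedSpace ℝ G]

theorem exists_pos_norm_add_mul_norm_le (S : E →ₗ[ℝ] F) (R : E →ₗ[ℝ] G)
    (h : ∀ x, ‖x‖ = 1 → ‖S x‖ < ‖R x‖) : ∃ c > 0, ∀ x, ‖S x‖ + c * ‖x‖ ≤ ‖R x‖ := by
  have hcont : Continuous fun x => ‖R x‖ - ‖S x‖ := by
    have := R.continuous_of_finiteDimensional
    have := S.continuous_of_finiteDimensional
    fun_prop
  obtain ⟨c, hc, hcx⟩ := (isCompact_sphere (0 : E) 1).exists_forall_le' hcont.continuousOn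
    (a := 0) fun x hx => sub_pos.2 (h x (mem_sphere_zero_iff_norm.1 hx))
  refine ⟨c, hc, fun x => ?_⟩
  rcases eq_or_ne x 0 with rfl | hx
  · simp
  have hx' : 0 < ‖x‖ := norm_pos_iff.2 hx
  have := hcx (‖x‖⁻¹ • x) (by simp [norm_smul, hx])
  simp only [map_smul, norm_smul, norm_inv, norm_norm, ← mul_sub] at this
  linarith [(le_inv_mul_iff₀ hx').1 this]

end

section

variable {E F G : Type*} [NormedAddCommGroup E] [InnerProductSpace ℝ E] [FiniteDimensional ℝ E]
  [NormedAddCommGroup F] [InnerProductSpace ℝ F] [FiniteDimensional ℝ F]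
  [NormedAddCommGroup G] [InnerProductSpace ℝ G] [FiniteDimensional ℝ G]

/-- `h ↦ r * ‖B† h‖` is the support function of `B '' closedBall 0 r`, so a point below it lies in
that compact convex set, by Hahn–Banach. -/
theorem exists_norm_le_apply_eq_of_inner_le (B : E →ₗ[ℝ] F) {r : ℝ} (hr : 0 ≤ r) {v : F}
    (hv : ∀ h, ⟪h, v⟫ ≤ r * ‖B.adjoint h‖) : ∃ z, ‖z‖ ≤ r ∧ B z = v := by
  by_contra! hcon
  have hK : IsCompact (B '' closedBall 0 r) :=
    (isCompact_closedBall 0 r).image B.continuous_of_finiteDimensional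
  have hvK : v ∉ B '' closedBall 0 r := fun ⟨z, hz, hzv⟩ =>
    hcon z (mem_closedBall_zero_iff.1 hz) hzv
  obtain ⟨f, u, hfK, hfv⟩ :=
    geometric_hahn_banach_closed_point ((convex_closedBall 0 r).linear_image B) hK.isClosed hvK
  set h := (InnerProductSpace.toDual ℝ F).symm f
  have hf : ∀ y, f y = ⟪h, y⟫ := fun y => InnerProductSpace.toDual_symm_apply.symm
  set a := B.adjoint h
  -- maximises `⟪a, ·⟫` on the ball, also when `a = 0`
  set z := (r * ‖a‖⁻¹) • a
  have hz : ‖z‖ ≤ r := by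
    rw [norm_smul, Real.norm_of_nonneg (by positivity), mul_assoc]
    exact mul_le_of_le_one_right hr inv_mul_le_one
  have hBz : ⟪h, B z⟫ = r * ‖a‖ := by
    rw [← LinearMap.adjoint_inner_left, real_inner_smul_right, real_inner_self_eq_norm_sq, sq,
      mul_assoc, ← mul_assoc ‖a‖⁻¹, inv_mul_mul_self]
  have := hfK _ ⟨z, mem_closedBall_zero_iff.2 hz, rfl⟩
  rw [hf, hBz] at this
  linarith [hv h, hf v]

theorem exists_norm_le_apply_eq_apply_add (B : E →ₗ[ℝ] F) (C : G →ₗ[ℝ] F) {c : ℝ}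
    (hBC : ∀ h, ‖C.adjoint h‖ + c * ‖h‖ ≤ ‖B.adjoint h‖) {s : ℝ} (hs : 0 ≤ s) {y : G} {e : F}
    (hy : ‖y‖ ≤ s) (he : ‖e‖ ≤ c * s) : ∃ z, ‖z‖ ≤ s ∧ B z = C y + e := by
  refine exists_norm_le_apply_eq_of_inner_le B hs fun h => ?_
  calc ⟪h, C y + e⟫ = ⟪C.adjoint h, y⟫ + ⟪h, e⟫ := by
        rw [inner_add_right, LinearMap.adjoint_inner_left]
    _ ≤ ‖C.adjoint h‖ * s + ‖h‖ * (c * s) := by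
        gcongr
        · exact (real_inner_le_norm _ _).trans (by gcongr)
        · exact (real_inner_le_norm _ _).trans (by gcongr)
    _ = s * (‖C.adjoint h‖ + c * ‖h‖) := by ring
    _ ≤ s * ‖B.adjoint h‖ := by gcongr; exact hBC h

end

section

variable {α E : Type*} [MeasurableSpace α] {μ : Measure α} [IsFiniteMeasure μ]
  [NormedAddCommGroup E] [NormedSpace ℝ E]

theorem integral_le_sqrt_of_integral_sq_le_one {f : α → ℝ} (hf : Integrable f μ)
    (hf2 : Integrable (fun x => f x ^ 2) μ) (h1 : ∫ x, f x ^ 2 ∂μ ≤ 1) :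
    ∫ x, f x ∂μ ≤ √(μ.real univ) := by
  rcases eq_zero_or_neZero μ with rfl | _
  · simp
  set s := √(μ.real univ)
  have hs : 0 < s := Real.sqrt_pos.2 measureReal_univ_pos
  have hs2 : s ^ 2 = μ.real univ := Real.sq_sqrt measureReal_univ_pos.le
  -- integrating `2 s f ≤ s² f² + 1` gives `2 s ∫ f ≤ s² + s²`
  have hamgm : ∫ x, 2 * s * f x ∂μ ≤ ∫ x, s ^ 2 * f x ^ 2 + 1 ∂μ :=
    integral_mono (hf.const_mul _) ((hf2.const_mul _).add (integrable_const 1))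
      fun x => by nlinarith [sq_nonneg (s * f x - 1)]
  rw [integral_const_mul, integral_add (hf2.const_mul _) (integrable_const 1), integral_const_mul,
    integral_const, smul_eq_mul, mul_one, ← hs2] at hamgm
  nlinarith

theorem norm_integral_le_sqrt_of_integral_norm_sq_le_one {w : α → E}
    (hw : AEStronglyMeasurable w μ) (hw2 : Integrable (fun x => ‖w x‖ ^ 2) μ)
    (h1 : ∫ x, ‖w x‖ ^ 2 ∂μ ≤ 1) : ‖∫ x, w x ∂μ‖ ≤ √(μ.real univ) :=
  (norm_integral_le_integral_norm w).trans <| integral_le_sqrt_of_integral_sq_le_one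
    (((memLp_two_iff_integrable_sq_norm hw).2 hw2).integrable one_le_two).norm hw2 h1

end

theorem eNorm_nonneg {k : ℕ} (v : Fin k → ℝ) : 0 ≤ eNorm v :=
  Real.sqrt_nonneg _

theorem eNorm_eq_norm_toLp {k : ℕ} (v : Fin k → ℝ) : eNorm v = ‖toLp 2 v‖ := by
  simp [eNorm, EuclideanSpace.norm_eq]

theorem adjoint_toEuclideanLin {m n : Type*} [Fintype m] [DecidableEq m] [Fintype n]
    [DecidableEq n] (A : Matrix m n ℝ) :
    (toEuclideanLin A).adjoint = toEuclideanLin Aᵀ := by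
  rw [← toEuclideanLin_conjTranspose_eq_adjoint, conjTranspose_eq_transpose_of_trivial]

theorem eNorm_mulVec {m k : ℕ} (A : Matrix (Fin m) (Fin k) ℝ) (v : Fin k → ℝ) :
    eNorm (A *ᵥ v) = ‖toEuclideanLin A (toLp 2 v)‖ :=
  eNorm_eq_norm_toLp _

theorem eNorm_smul {k : ℕ} (a : ℝ) (v : Fin k → ℝ) : eNorm (a • v) = |a| * eNorm v := by
  simp only [eNorm_eq_norm_toLp, toLp_smul, norm_smul, Real.norm_eq_abs]

theorem integral_toLp {ι α : Type*} [Fintype ι] [MeasurableSpace α] {μ : Measure α}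
    (w : α → ι → ℝ) :
    ∫ t, toLp 2 (w t) ∂μ = toLp 2 (∫ t, w t ∂μ) :=
  (PiLp.continuousLinearEquiv 2 ℝ _).symm.integral_comp_comm w

namespace Admissible

variable {k : ℕ} {T : ℝ} {w : ℝ → Fin k → ℝ}

theorem memLp_toLp (hw : Admissible T w) :
    MemLp (fun t => toLp 2 (w t)) 2 (volume.restrict (Ioc 0 T)) := by
  obtain ⟨hwm, hw2, -⟩ := hw
  simp_rw [eNorm_eq_norm_toLp] at hw2
  exact (memLp_two_iff_integrable_sq_norm
    ((PiLp.continuous_toLp 2 _).measurable.comp hwm).aestronglyMeasurable).2 hw2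

theorem integrableOn (hw : Admissible T w) : IntegrableOn w (Ioc 0 T) :=
  (PiLp.continuousLinearEquiv 2 ℝ fun _ : Fin k => ℝ).toContinuousLinearMap.integrable_comp
    (hw.memLp_toLp.integrable one_le_two)

theorem eNorm_integral_le (hw : Admissible T w) (hT : 0 ≤ T) :
    eNorm (∫ t in Ioc 0 T, w t) ≤ √T := by
  have hμ := hw.memLp_toLp.aestronglyMeasurable
  obtain ⟨-, hw2, hw1⟩ := hw
  simp_rw [eNorm_eq_norm_toLp] at hw2 hw1 ⊢
  have h := norm_integral_le_sqrt_of_integral_norm_sq_le_one hμ hw2 hw1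
  rwa [integral_toLp, measureReal_restrict_apply_univ, Real.volume_real_Ioc_of_le hT,
    sub_zero] at h

end Admissible

theorem admissible_const {k : ℕ} {T : ℝ} (hT : 0 ≤ T) {v : Fin k → ℝ} (hv : T * eNorm v ^ 2 ≤ 1) :
    Admissible T fun _ => v :=
  ⟨measurable_const, integrableOn_const measure_Ioc_lt_top.ne, by
    rwa [setIntegral_const, Real.volume_real_Ioc_of_le hT, sub_zero, smul_eq_mul]⟩

theorem setIntegral_mulVec_add_mulVec {n q p : ℕ} (B : Matrix (Fin n) (Fin q) ℝ)
    (C : Matrix (Fin n) (Fin p) ℝ) (u : Fin q → ℝ) {T : ℝ} (hT : 0 ≤ T) {w : ℝ → Fin p → ℝ}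
    (hw : IntegrableOn w (Ioc 0 T)) :
    ∫ t in Ioc 0 T, (B *ᵥ u + C *ᵥ w t) = T • B *ᵥ u + C *ᵥ ∫ t in Ioc 0 T, w t := by
  have hCw : IntegrableOn (fun t => C *ᵥ w t) (Ioc 0 T) :=
    C.mulVecLin.toContinuousLinearMap.integrable_comp hw
  have hCw_int : ∫ t in Ioc 0 T, C *ᵥ w t = C *ᵥ ∫ t in Ioc 0 T, w t :=
    C.mulVecLin.toContinuousLinearMap.integral_comp_comm hw
  rw [integral_add (integrable_const _) hCw, setIntegral_const, Real.volume_real_Ioc_of_le hT,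
    sub_zero, hCw_int]

theorem resilientlyReachableAt_of_forall_exists_mulVec_add_eq {n q p : ℕ}
    {B : Matrix (Fin n) (Fin q) ℝ} {C : Matrix (Fin n) (Fin p) ℝ} {x₀ xgoal : Fin n → ℝ}
    {ε T : ℝ} (hε : 0 ≤ ε) (hT : 0 < T)
    (hsolve : ∀ W, eNorm W ≤ √T → ∃ z, eNorm z ≤ √T ∧ B *ᵥ z + C *ᵥ W = xgoal - x₀) :
    ResilientlyReachableAt B C x₀ xgoal ε T := by
  intro w hw
  obtain ⟨z, hz, hBz⟩ := hsolve _ (hw.eNorm_integral_le hT.le)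
  have hz2 : eNorm z ^ 2 ≤ T := (Real.le_sqrt (eNorm_nonneg _) hT.le).1 hz
  refine ⟨fun _ => T⁻¹ • z, admissible_const hT.le ?_, ?_⟩
  · calc T * eNorm (T⁻¹ • z) ^ 2 = eNorm z ^ 2 / T := by
          rw [eNorm_smul, abs_of_pos (inv_pos.2 hT)]
          field_simp
      _ ≤ 1 := (div_le_one hT).2 hz2
  · rw [setIntegral_mulVec_add_mulVec B C _ hT.le hw.integrableOn, mulVec_smul, smul_smul,
      mul_inv_cancel₀ hT.ne', one_smul, hBz, add_sub_cancel, sub_self]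
    rwa [eNorm_eq_norm_toLp, toLp_zero, norm_zero]

theorem exists_pos_forall_exists_mulVec_add_eq {n q p : ℕ} (B : Matrix (Fin n) (Fin q) ℝ)
    (C : Matrix (Fin n) (Fin p) ℝ) (hg : ∀ h, eNorm h = 1 → eNorm (Cᵀ *ᵥ h) < eNorm (Bᵀ *ᵥ h)) :
    ∃ c > 0, ∀ {s : ℝ}, 0 ≤ s → ∀ W d, eNorm W ≤ s → eNorm d ≤ c * s →
      ∃ z, eNorm z ≤ s ∧ B *ᵥ z + C *ᵥ W = d := by
  obtain ⟨c, hc, hBC⟩ := exists_pos_norm_add_mul_norm_le (toEuclideanLin C).adjoint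
    (toEuclideanLin B).adjoint fun h hh => by
      simpa only [adjoint_toEuclideanLin, eNorm_mulVec, toLp_ofLp] using
        hg (ofLp h) (by rwa [eNorm_eq_norm_toLp, toLp_ofLp])
  refine ⟨c, hc, fun hs W d hW hd => ?_⟩
  obtain ⟨z, hz, hBz⟩ := exists_norm_le_apply_eq_apply_add _ _ hBC hs (y := toLp 2 (-W))
    (e := toLp 2 d) (by rwa [toLp_neg, norm_neg, ← eNorm_eq_norm_toLp])
    (by rwa [← eNorm_eq_norm_toLp])
  refine ⟨ofLp z, by rwa [eNorm_eq_norm_toLp, toLp_ofLp], ?_⟩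
  have hBz' : B *ᵥ ofLp z = C *ᵥ (-W) + d := congrArg ofLp hBz
  rw [hBz', mulVec_neg, neg_add_cancel_comm]

theorem resiliently_reachable_of_g_neg {n m p : ℕ} (B : Matrix (Fin n) (Fin (m - p)) ℝ)
    (C : Matrix (Fin n) (Fin p) ℝ) (x₀ xgoal : Fin n → ℝ) (ε : ℝ) (hε : 0 ≤ ε)
    (hg : ∀ h : Fin n → ℝ, eNorm h = 1 →
      eNorm (Cᵀ.mulVec h) - eNorm (Bᵀ.mulVec h) < 0) :
    ∃ tlim : ℝ, 0 ≤ tlim ∧ ∀ t : ℝ, tlim ≤ t →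
      ResilientlyReachableAt B C x₀ xgoal ε t := by
  obtain ⟨c, hc, hsolve⟩ :=
    exists_pos_forall_exists_mulVec_add_eq B C fun h hh => sub_neg.1 (hg h hh)
  refine ⟨max 1 ((eNorm (xgoal - x₀) / c) ^ 2), zero_le_one.trans (le_max_left _ _),
    fun T hT => ?_⟩
  have hT0 : 0 < T := zero_lt_one.trans_le ((le_max_left _ _).trans hT)
  have hd : eNorm (xgoal - x₀) ≤ c * √T := by
    rw [← div_le_iff₀' hc, Real.le_sqrt (div_nonneg (eNorm_nonneg _) hc.le) hT0.le]
    exact (le_max_right _ _).trans hT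
  exact resilientlyReachableAt_of_forall_exists_mulVec_add_eq hε hT0 fun W hW =>
    hsolve (Real.sqrt_nonneg T) W _ hW hd
end

section
/- Let V ∈ ℝ^{n×m} with m ≥ 4n + 1, suppose V has orthonormal rows (VVᵀ = I_n), that all columns of V have the same Euclidean norm, and that at least two columns of V are collinear. Then for every choice of two distinct columns C₁, C₂ of V, the matrix I_n − 2(C₁C₁ᵀ + C₂C₂ᵀ) is positive definite (equivalently, removing any two columns leaves B with BBᵀ − CCᵀ ≻ 0); hence V is 2-resilient. -/
/- Since `V Vᵀ = 1`, the squared column norms sum to `trace (Vᵀ V) = trace (V Vᵀ) = n`; as they are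
all equal, each column `c` has `c ⬝ᵥ c = n / m < 1/4`. By Cauchy–Schwarz the quadratic
form of `2 (c₁c₁ᵀ + c₂c₂ᵀ)` is then at most `4 n / m < 1` times `x ⬝ᵥ x`. -/

open Matrix

lemma eNorm_sq {k : ℕ} (v : Fin k → ℝ) : eNorm v ^ 2 = v ⬝ᵥ v := by
  rw [eNorm, Real.sq_sqrt (Finset.sum_nonneg fun i _ => sq_nonneg (v i))]
  simp only [dotProduct, sq]

lemma isHermitian_vecMulVec_self {ι : Type*} (u : ι → ℝ) : (vecMulVec u u).IsHermitian := by
  rw [IsHermitian, conjTranspose_eq_transpose_of_trivial, transpose_vecMulVec]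

section VecMulVec

variable {ι : Type*} [Fintype ι]

lemma dotProduct_vecMulVec_self_mulVec (u x : ι → ℝ) :
    x ⬝ᵥ (vecMulVec u u *ᵥ x) = (u ⬝ᵥ x) ^ 2 := by
  rw [vecMulVec_mulVec, op_smul_eq_smul, dotProduct_smul, smul_eq_mul, dotProduct_comm, sq]

lemma dotProduct_sq_le (u x : ι → ℝ) : (u ⬝ᵥ x) ^ 2 ≤ (u ⬝ᵥ u) * (x ⬝ᵥ x) := by
  simpa only [dotProduct, sq] using Finset.sum_mul_sq_le_sq_mul_sq Finset.univ u x

lemma posDef_one_sub_smul_vecMulVec_add_vecMulVec [DecidableEq ι] {a : ℝ} (ha : 0 ≤ a)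
    {u w : ι → ℝ} (h : a * (u ⬝ᵥ u + w ⬝ᵥ w) < 1) :
    (1 - a • (vecMulVec u u + vecMulVec w w)).PosDef := by
  refine PosDef.of_dotProduct_mulVec_pos
    (isHermitian_one.sub (((isHermitian_vecMulVec_self u).add
      (isHermitian_vecMulVec_self w)).smul (IsSelfAdjoint.all a))) fun x hx => ?_
  have hxx : 0 < x ⬝ᵥ x := by simpa using dotProduct_star_self_pos_iff.mpr hx
  have hform : star x ⬝ᵥ ((1 - a • (vecMulVec u u + vecMulVec w w)) *ᵥ x) =
      x ⬝ᵥ x - a * ((u ⬝ᵥ x) ^ 2 + (w ⬝ᵥ x) ^ 2) := by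
    rw [star_trivial, sub_mulVec, one_mulVec, smul_mulVec, add_mulVec, dotProduct_sub,
      dotProduct_smul, dotProduct_add, dotProduct_vecMulVec_self_mulVec,
      dotProduct_vecMulVec_self_mulVec, smul_eq_mul]
  rw [hform]
  nlinarith [mul_le_mul_of_nonneg_left (add_le_add (dotProduct_sq_le u x) (dotProduct_sq_le w x)) ha]

end VecMulVec

lemma sum_dotProduct_col_self_of_mul_transpose_eq_one {ι κ : Type*} [Fintype ι] [DecidableEq ι]
    [Fintype κ] {V : Matrix ι κ ℝ} (hV : V * Vᵀ = 1) :
    ∑ j, (fun i => V i j) ⬝ᵥ (fun i => V i j) = Fintype.card ι := by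
  rw [← trace_one, ← hV, trace_mul_comm]
  rfl

theorem orthonormal_rows_equal_columns_two_resilient_general {n m : ℕ}
    (V : Matrix (Fin n) (Fin m) ℝ) (hm : 4 * n + 1 ≤ m) (hV : V * Vᵀ = 1)
    (hcol : ∀ j k : Fin m, eNorm (fun i => V i j) = eNorm (fun i => V i k)) :
    ∀ j k : Fin m, j ≠ k →
      ((1 : Matrix (Fin n) (Fin n) ℝ) -
        (2 : ℝ) • (vecMulVec (fun i => V i j) (fun i => V i j) +
          vecMulVec (fun i => V i k) (fun i => V i k))).PosDef := by
  intro j k _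
  have hm_pos : (0 : ℝ) < m := by exact_mod_cast (show 0 < m by omega)
  have hcol_sq : ∀ t : Fin m, (fun i => V i t) ⬝ᵥ (fun i => V i t) = n / m := by
    intro t
    have hsum := sum_dotProduct_col_self_of_mul_transpose_eq_one hV
    simp only [← eNorm_sq, hcol _ t, Finset.sum_const, Finset.card_univ, Fintype.card_fin,
      nsmul_eq_mul] at hsum
    rw [← eNorm_sq, eq_div_iff hm_pos.ne', mul_comm, hsum]
  refine posDef_one_sub_smul_vecMulVec_add_vecMulVec zero_le_two ?_
  rw [hcol_sq, hcol_sq, ← add_div, mul_div_assoc', div_lt_one hm_pos]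
  have : (4 * n + 1 : ℝ) ≤ m := by exact_mod_cast hm
  linarith

theorem orthonormal_rows_equal_columns_two_resilient {n m : ℕ}
    (V : Matrix (Fin n) (Fin m) ℝ) (hm : 4 * n + 1 ≤ m) (hV : V * Vᵀ = 1)
    (hcol : ∀ j k : Fin m, eNorm (fun i => V i j) = eNorm (fun i => V i k))
    (hcollin : ∃ j k : Fin m, j ≠ k ∧ ∃ c : ℝ,
      ((fun i => V i k) = c • (fun i => V i j) ∨ (fun i => V i j) = c • (fun i => V i k))) :
    ∀ j k : Fin m, j ≠ k →
      ((1 : Matrix (Fin n) (Fin n) ℝ) -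
        (2 : ℝ) • (vecMulVec (fun i => V i j) (fun i => V i j) +
          vecMulVec (fun i => V i k) (fun i => V i k))).PosDef :=
  orthonormal_rows_equal_columns_two_resilient_general V hm hV hcol
end
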